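/- Let K be a field of characteristic zero, G a finite group, M ≤ G abelian with |M̂| = |M|, ω a normalized 2-cocycle on M̂, and τ ∈ G. Let {(m_i, m'_i)}_{i=1}^r be a complete set of coset representatives of the subgroup (Rad_τ)^⊥ in M × M. Then in the group algebra K G: Σ_{i=1}^r Σ_{(φ,ψ)∈Rad_τ} φ(m_i)·ψ(m'_i)·e_φ^M·τ·e_ψ^M = |Rad_τ|·e_ε^M·τ·e_ε^M. -/

import Mathlib

open scoped TensorProduct BigOperators
open MonoidAlgebra

noncomputable section

variable (K : Type) [Field K] {G : Type} [Group G]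

/-- The primitive idempotent `e_φ^M ∈ K M ⊆ K G` attached to a character `φ` of a subgroup
`M` of `G`. -/
def idem (M : Subgroup G) (φ : ↥M →* Kˣ) : MonoidAlgebra K G :=
  (Nat.card M : K)⁻¹ • ∑ᶠ m : ↥M, ((φ m⁻¹ : Kˣ) : K) • MonoidAlgebra.of K G (m : G)

/-- `N_τ = {(φ,ψ) ∈ M̂ × M̂ : ψ(m) = φ(τ⁻¹mτ) for all m ∈ M ∩ τMτ⁻¹}`. -/
def Ntau (M : Subgroup G) (τ : G) : Set ((↥M →* Kˣ) × (↥M →* Kˣ)) :=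
  {p | ∀ (m : G) (hm : m ∈ M) (hm' : τ⁻¹ * m * τ ∈ M),
    p.2 ⟨m, hm⟩ = p.1 ⟨τ⁻¹ * m * τ, hm'⟩}

/-- The `2`-cocycle `(ω,ω⁻¹)` on `M̂ × M̂`. -/
def pairCocycle (M : Subgroup G) (ω : (↥M →* Kˣ) → (↥M →* Kˣ) → Kˣ)
    (x y : (↥M →* Kˣ) × (↥M →* Kˣ)) : Kˣ :=
  ω x.1 y.1 * (ω x.2 y.2)⁻¹

/-- `Rad_τ`, the radical of the restriction of `(ω,ω⁻¹)` to `N_τ`. -/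
def Radtau (M : Subgroup G) (ω : (↥M →* Kˣ) → (↥M →* Kˣ) → Kˣ) (τ : G) :
    Set ((↥M →* Kˣ) × (↥M →* Kˣ)) :=
  {x ∈ Ntau K M τ | ∀ y ∈ Ntau K M τ, pairCocycle K M ω x y = pairCocycle K M ω y x}

/-- `(Rad_τ)^⊥ = {(m,m') ∈ M × M : φ(m)·ψ(m') = 1 for all (φ,ψ) ∈ Rad_τ}`. -/
def RadtauPerp (M : Subgroup G) (ω : (↥M →* Kˣ) → (↥M →* Kˣ) → Kˣ) (τ : G) :
    Set (↥M × ↥M) :=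
  {q | ∀ p ∈ Radtau K M ω τ, p.1 q.1 * p.2 q.2 = 1}


/-! `Rad_τ` is a subgroup of `M̂ × M̂`: for a 2-cocycle `c` on an abelian group the skew form
`c x y / c y x` is multiplicative in `x`, so the radical of its restriction to the subgroup `N_τ`
is an intersection of kernels. Through `(φ, ψ) ↦ ((m, m') ↦ φ m * ψ m')` it becomes a group of
characters of `A = M × M` whose annihilator is `(Rad_τ)^⊥`. For `p ≠ 1` in `Rad_τ`, orthogonality
gives `0 = ∑_{a ∈ A} p a = |(Rad_τ)^⊥| ∑_i p (m_i, m'_i)`, so on the left only `p = 1` survives,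
with coefficient `r`. Counting `∑_{a, p} p a` in two ways gives
`|Rad_τ| |(Rad_τ)^⊥| = |A| = r |(Rad_τ)^⊥|`, hence `r = |Rad_τ|`. -/

section TwoCocycle

variable {Γ C : Type*} [CommGroup Γ] [CommGroup C] {c : Γ → Γ → C}

theorem twoCocycle_div_swap_mul_left (hc : ∀ x y z, c x y * c (x * y) z = c y z * c x (y * z))
    (x x' y : Γ) : c (x * x') y / c y (x * x') = c x y / c y x * (c x' y / c y x') := by
  rw [div_mul_div_comm, div_eq_div_iff_mul_eq_mul]
  have h₁ := hc x x' y
  have h₂ := hc y x x'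
  have h₃ := hc x y x'
  rw [mul_comm x' y, mul_comm y x] at *
  refine mul_left_cancel (a := c x x' * c (x * y) x') ?_
  calc c x x' * c (x * y) x' * (c (x * x') y * (c y x * c y x'))
      = c x x' * c (x * x') y * (c y x * c (x * y) x') * c y x' := by ac_rfl
    _ = c x' y * c x (y * x') * (c x x' * c y (x * x')) * c y x' := by rw [h₁, h₂]
    _ = c x x' * c x' y * c y (x * x') * (c y x' * c x (y * x')) := by ac_rfl
    _ = c x x' * c x' y * c y (x * x') * (c x y * c (x * y) x') := by rw [h₃]
    _ = c x x' * c (x * y) x' * (c x y * c x' y * c y (x * x')) := by ac_rfl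

variable (c) in
def twoCocycleSkew (hc : ∀ x y z, c x y * c (x * y) z = c y z * c x (y * z)) (y : Γ) : Γ →* C :=
  MonoidHom.mk' (fun x => c x y / c y x) fun x x' => twoCocycle_div_swap_mul_left hc x x' y

variable (c) in
def twoCocycleRadical (hc : ∀ x y z, c x y * c (x * y) z = c y z * c x (y * z))
    (N : Subgroup Γ) : Subgroup Γ :=
  N ⊓ ⨅ y : N, (twoCocycleSkew c hc y).ker

theorem mem_twoCocycleRadical (hc : ∀ x y z, c x y * c (x * y) z = c y z * c x (y * z))
    {N : Subgroup Γ} {x : Γ} :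
    x ∈ twoCocycleRadical c hc N ↔ x ∈ N ∧ ∀ y ∈ N, c x y = c y x := by
  simp [twoCocycleRadical, twoCocycleSkew, Subgroup.mem_iInf, div_eq_one]

end TwoCocycle

section Transversal

variable {A : Type*} [Group A] {P : Set A} {r : ℕ} {rep : Fin r → A}

theorem bijective_mul_transversal (hrep : ∀ a, ∃! i, a * (rep i)⁻¹ ∈ P) :
    Function.Bijective fun x : Fin r × P => (x.2 : A) * rep x.1 := by
  refine ⟨?_, fun a => ?_⟩
  · rintro ⟨i, h⟩ ⟨j, g⟩ hhg
    dsimp only at hhg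
    have hij : i = j := (hrep (h * rep i)).unique (by simp) (by simp [hhg])
    subst hij
    exact Prod.ext rfl (Subtype.ext (by simpa using hhg))
  · obtain ⟨i, hi, -⟩ := hrep a
    exact ⟨(i, ⟨_, hi⟩), by simp⟩

theorem sum_eq_sum_transversal [Fintype A] [Fintype P] (hrep : ∀ a, ∃! i, a * (rep i)⁻¹ ∈ P)
    {β : Type*} [AddCommMonoid β] (f : A → β) :
    ∑ a, f a = ∑ i, ∑ h : P, f (h * rep i) := by
  rw [← Fintype.sum_prod_type']
  exact (Fintype.sum_bijective _ (bijective_mul_transversal hrep) _ _ fun _ => rfl).symm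

theorem card_eq_mul_of_transversal (hrep : ∀ a, ∃! i, a * (rep i)⁻¹ ∈ P) :
    Nat.card A = r * Nat.card P := by
  rw [← Nat.card_congr (Equiv.ofBijective _ (bijective_mul_transversal hrep)), Nat.card_prod,
    Nat.card_eq_fintype_card, Fintype.card_fin]

end Transversal

section Characters

variable {K : Type*} [Field K] {A Γ : Type*} [Group A] [Group Γ] {r : ℕ} {rep : Fin r → A}

theorem sum_coe_apply_eq_zero_of_ne_one [Fintype A] {ψ : A →* Kˣ} (hψ : ψ ≠ 1) :
    ∑ a, (ψ a : K) = 0 :=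
  sum_hom_units_eq_zero ((Units.coeHom K).comp ψ) fun h =>
    hψ <| MonoidHom.ext fun a => Units.ext <| DFunLike.congr_fun h a

def charAnnihilator (χ : Γ →* A →* Kˣ) (R : Subgroup Γ) : Set A :=
  {a | ∀ p ∈ R, χ p a = 1}

variable {χ : Γ →* A →* Kˣ} {R : Subgroup Γ}

instance : Nonempty (charAnnihilator χ R) := ⟨⟨1, fun p _ => map_one (χ p)⟩⟩

theorem sum_apply_eq_zero_of_notMem_charAnnihilator [Fintype R] {a : A}
    (ha : a ∉ charAnnihilator χ R) : ∑ p : R, (χ p a : K) = 0 := by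
  refine sum_coe_apply_eq_zero_of_ne_one (ψ := (MonoidHom.eval a).comp (χ.comp R.subtype))
    fun h => ha fun p hp => ?_
  simpa using DFunLike.congr_fun h ⟨p, hp⟩

variable [CharZero K] [Fintype A]

theorem sum_transversal_apply_eq_zero (hχ : Function.Injective χ)
    (hrep : ∀ a, ∃! i, a * (rep i)⁻¹ ∈ charAnnihilator χ R) {p : Γ} (hp : p ∈ R) (h1 : p ≠ 1) :
    ∑ i, (χ p (rep i) : K) = 0 := by
  classical
  have hsum := sum_coe_apply_eq_zero_of_ne_one (K := K) fun h => h1 ((map_eq_one_iff χ hχ).mp h)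
  rw [sum_eq_sum_transversal hrep] at hsum
  simp only [map_mul, fun h : charAnnihilator χ R => h.2 p hp, one_mul, Finset.sum_const,
    Finset.card_univ, nsmul_eq_mul, ← Finset.mul_sum] at hsum
  exact (mul_eq_zero.mp hsum).resolve_left (Nat.cast_ne_zero.mpr Fintype.card_ne_zero)

variable [Fintype R]

theorem card_charAnnihilator_mul_card (hχ : Function.Injective χ) :
    Nat.card (charAnnihilator χ R) * Nat.card R = Nat.card A := by
  classical
  have hinner (a : A) : ∑ p : R, (χ p a : K) =
      if a ∈ charAnnihilator χ R then (Nat.card R : K) else 0 := by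
    split_ifs with ha
    · simp [fun p : R => ha p p.2, Nat.card_eq_fintype_card]
    · exact sum_apply_eq_zero_of_notMem_charAnnihilator ha
  have houter (p : R) : ∑ a, (χ p a : K) = if p = 1 then (Nat.card A : K) else 0 := by
    split_ifs with hp
    · simp [hp, Nat.card_eq_fintype_card]
    · exact sum_coe_apply_eq_zero_of_ne_one fun h =>
        hp (Subtype.ext ((map_eq_one_iff χ hχ).mp h))
  have := Finset.sum_comm (s := Finset.univ) (t := Finset.univ) (f := fun a (p : R) => (χ p a : K))
  simp only [hinner, houter, Finset.sum_ite_eq', Finset.mem_univ, if_true] at this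
  rw [Finset.sum_ite, Finset.sum_const_zero, add_zero, Finset.sum_const, nsmul_eq_mul,
    ← Fintype.card_subtype, ← Nat.card_eq_fintype_card] at this
  exact_mod_cast this

theorem card_eq_of_transversal (hχ : Function.Injective χ)
    (hrep : ∀ a, ∃! i, a * (rep i)⁻¹ ∈ charAnnihilator χ R) : Nat.card R = r := by
  have := (card_charAnnihilator_mul_card (R := R) hχ).trans (card_eq_mul_of_transversal hrep)
  rw [mul_comm r] at this
  exact Nat.eq_of_mul_eq_mul_left Nat.card_pos this

theorem sum_transversal_sum_smul (hχ : Function.Injective χ)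
    (hrep : ∀ a, ∃! i, a * (rep i)⁻¹ ∈ charAnnihilator χ R)
    {V : Type*} [AddCommMonoid V] [Module K V] (X : Γ → V) :
    ∑ i, ∑ p : R, (χ p (rep i) : K) • X p = (Nat.card R : K) • X 1 := by
  classical
  rw [Finset.sum_comm, card_eq_of_transversal hχ hrep]
  simp_rw [← Finset.sum_smul]
  rw [Fintype.sum_eq_single 1 fun p hp => by
    rw [sum_transversal_apply_eq_zero hχ hrep p.2 (by simpa using hp), zero_smul]]
  simp

end Characters

section Pairing

variable {K : Type*} [Field K] {M N : Type*} [Group M] [Group N]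

def charPairing : (M →* Kˣ) × (N →* Kˣ) →* M × N →* Kˣ :=
  (MonoidHom.compHom' (MonoidHom.fst M N)).coprod (MonoidHom.compHom' (MonoidHom.snd M N))

@[simp]
theorem charPairing_apply (p : (M →* Kˣ) × (N →* Kˣ)) (q : M × N) :
    charPairing p q = p.1 q.1 * p.2 q.2 :=
  rfl

theorem charPairing_injective : Function.Injective (charPairing (K := K) (M := M) (N := N)) := by
  refine (injective_iff_map_eq_one _).mpr fun p hp => Prod.ext ?_ ?_ <;> ext m
  · simpa using DFunLike.congr_fun hp (m, 1)
  · simpa using DFunLike.congr_fun hp (1, m)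

end Pairing

variable {K}

theorem pairCocycle_cocycle {M : Subgroup G} {ω : (↥M →* Kˣ) → (↥M →* Kˣ) → Kˣ}
    (hω : ∀ φ ψ χ : ↥M →* Kˣ, ω φ ψ * ω (φ * ψ) χ = ω ψ χ * ω φ (ψ * χ)) (x y z) :
    pairCocycle K M ω x y * pairCocycle K M ω (x * y) z =
      pairCocycle K M ω y z * pairCocycle K M ω x (y * z) := by
  simp only [pairCocycle, Prod.fst_mul, Prod.snd_mul]
  rw [mul_mul_mul_comm, mul_mul_mul_comm (ω y.1 z.1), ← mul_inv, ← mul_inv, hω, hω]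

variable (K) in
def ntauSubgroup (M : Subgroup G) (τ : G) : Subgroup ((↥M →* Kˣ) × (↥M →* Kˣ)) where
  carrier := Ntau K M τ
  mul_mem' hp hq m hm hm' := by simp [hp m hm hm', hq m hm hm']
  one_mem' _ _ _ := rfl
  inv_mem' hp m hm hm' := by simp [hp m hm hm']

theorem radtau_eq_twoCocycleRadical {M : Subgroup G} {ω : (↥M →* Kˣ) → (↥M →* Kˣ) → Kˣ}
    (hω : ∀ φ ψ χ : ↥M →* Kˣ, ω φ ψ * ω (φ * ψ) χ = ω ψ χ * ω φ (ψ * χ)) (τ : G) :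
    Radtau K M ω τ =
      twoCocycleRadical (pairCocycle K M ω) (pairCocycle_cocycle hω) (ntauSubgroup K M τ) := by
  ext x
  rw [SetLike.mem_coe, mem_twoCocycleRadical]
  rfl

variable (K)

theorem stmt9 [CharZero K] [Finite G] (M : Subgroup G)
    (ω : (↥M →* Kˣ) → (↥M →* Kˣ) → Kˣ)
    (hcocycle : ∀ φ ψ χ : ↥M →* Kˣ, ω φ ψ * ω (φ * ψ) χ = ω ψ χ * ω φ (ψ * χ))
    (τ : G) (r : ℕ) (rep : Fin r → ↥M × ↥M)
    (hrep : ∀ x : ↥M × ↥M, ∃! i : Fin r, x * (rep i)⁻¹ ∈ RadtauPerp K M ω τ) :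
    ∑ i : Fin r, ∑ᶠ p ∈ Radtau K M ω τ,
        (((Prod.fst p (rep i).1 : Kˣ) : K) * ((Prod.snd p (rep i).2 : Kˣ) : K)) •
          (idem K M (Prod.fst p) * MonoidAlgebra.of K G τ * idem K M (Prod.snd p)) =
      (Nat.card (Radtau K M ω τ) : K) •
        (idem K M (1 : ↥M →* Kˣ) * MonoidAlgebra.of K G τ * idem K M (1 : ↥M →* Kˣ)) := by
  have : Fintype M := Fintype.ofFinite M
  have hR := radtau_eq_twoCocycleRadical hcocycle τ
  set R :=
    twoCocycleRadical (pairCocycle K M ω) (pairCocycle_cocycle hcocycle) (ntauSubgroup K M τ)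
  have : Fintype R := Fintype.ofFinite R
  have hperp : RadtauPerp K M ω τ = charAnnihilator charPairing R := by
    rw [RadtauPerp, hR]
    rfl
  rw [hperp] at hrep
  rw [hR]
  simp only [← finsum_set_coe_eq_finsum_mem, finsum_eq_sum_of_fintype, ← Units.val_mul,
    ← charPairing_apply]
  exact sum_transversal_sum_smul charPairing_injective hrep
    fun p => idem K M p.1 * MonoidAlgebra.of K G τ * idem K M p.2

end
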